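/- In A = ℂ[x¹,x²,x³], fix ν, b ∈ ℝ, let L₁₃ := x¹·∂₃ + b·∂₁ and L₂₃ := b·∂₂ (derivations of A), and define the star product α⋆β := Σ_{n≥0} ((−iν)ⁿ/n!)·L₁₃ⁿ(α)·L₂₃ⁿ(β), a finite sum since L₂₃ is locally nilpotent on polynomials. Then: (i) x¹⋆x² = x¹x² − iν·b²; (ii) x³⋆x² = x²x³ − iν·b·x¹; (iii) x¹⋆x³ = x³⋆x¹ = x¹x³; and (iv) for every c ∈ ℝ the polynomial f_c := (1/2)(x¹)² − b·x³ − c is ⋆-central and undeformed: α⋆f_c = α·f_c = f_c⋆α for all α ∈ A. -/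
import Mathlib


open MvPolynomial
open scoped BigOperators

namespace ParabolicCylinderStar

/-- `L₁₃ := x¹·∂₃ + b·∂₁` as a derivation of `ℂ[x¹,x²,x³]`. -/
noncomputable def L13 (b : ℝ) :
    Derivation ℂ (MvPolynomial (Fin 3) ℂ) (MvPolynomial (Fin 3) ℂ) :=
  (X 0 : MvPolynomial (Fin 3) ℂ) • pderiv 2
    + (C (b : ℂ) : MvPolynomial (Fin 3) ℂ) • pderiv 0

/-- `L₂₃ := b·∂₂` as a derivation of `ℂ[x¹,x²,x³]`. -/
noncomputable def L23 (b : ℝ) :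
    Derivation ℂ (MvPolynomial (Fin 3) ℂ) (MvPolynomial (Fin 3) ℂ) :=
  (C (b : ℂ) : MvPolynomial (Fin 3) ℂ) • pderiv 1

/-- The abelian-twist star product
`α ⋆ β := Σ_{n≥0} ((−iν)ⁿ/n!)·L₁₃ⁿ(α)·L₂₃ⁿ(β)` (a finite sum). -/
noncomputable def star (ν b : ℝ) (α β : MvPolynomial (Fin 3) ℂ) :
    MvPolynomial (Fin 3) ℂ :=
  ∑ᶠ n : ℕ, (((-(Complex.I * ν)) ^ n / n.factorial : ℂ)) •
    (((L13 b).toLinearMap ^ n) α * ((L23 b).toLinearMap ^ n) β)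

/-- The parabolic cylinder `f_c := (1/2)(x¹)² − b·x³ − c`. -/
noncomputable def fc (b c : ℝ) : MvPolynomial (Fin 3) ℂ :=
  C (1 / 2 : ℂ) * (X 0) ^ 2 - C (b : ℂ) * X 2 - C (c : ℂ)

lemma pow_eq_zero_of {M : Type*} [AddCommMonoid M] [Module ℂ M]
    (L : M →ₗ[ℂ] M) (β : M) (N : ℕ) (h : (L ^ N) β = 0) {n : ℕ} (hn : N ≤ n) :
    (L ^ n) β = 0 := by
  obtain ⟨k, rfl⟩ := Nat.exists_eq_add_of_le hn
  rw [add_comm, pow_add, Module.End.mul_apply, h, map_zero]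

lemma star_eq_sum_range (ν b : ℝ) (α β : MvPolynomial (Fin 3) ℂ) (N : ℕ)
    (h : ∀ n, N ≤ n → ((L13 b).toLinearMap ^ n) α * ((L23 b).toLinearMap ^ n) β = 0) :
    star ν b α β = ∑ n ∈ Finset.range N,
      (((-(Complex.I * ν)) ^ n / n.factorial : ℂ)) •
        (((L13 b).toLinearMap ^ n) α * ((L23 b).toLinearMap ^ n) β) := by
  apply finsum_eq_finset_sum_of_support_subset
  intro n hn
  simp only [Function.mem_support] at hn
  simp only [Finset.coe_range, Set.mem_Iio]
  by_contra hN
  exact hn (by rw [h n (le_of_not_gt hN), smul_zero])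

lemma star_eq_right (ν b : ℝ) (α β : MvPolynomial (Fin 3) ℂ)
    (h : (L23 b) β = 0) : star ν b α β = α * β := by
  rw [star_eq_sum_range ν b α β 1]
  · simp
  · intro n hn
    rw [pow_eq_zero_of (L23 b).toLinearMap β 1 (by simpa using h) hn, mul_zero]

lemma star_eq_left (ν b : ℝ) (α β : MvPolynomial (Fin 3) ℂ)
    (h : (L13 b) α = 0) : star ν b α β = α * β := by
  rw [star_eq_sum_range ν b α β 1]
  · simp
  · intro n hn
    rw [pow_eq_zero_of (L13 b).toLinearMap α 1 (by simpa using h) hn, zero_mul]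

lemma L23_X1 (b : ℝ) : (L23 b) (X 1 : MvPolynomial (Fin 3) ℂ) = C (b:ℂ) := by
  simp [L23, pderiv_X]

lemma L23_C (b : ℝ) (z : ℂ) : (L23 b) (C z : MvPolynomial (Fin 3) ℂ) = 0 := by
  simp [L23]

lemma star_eq_two (ν b : ℝ) (α β : MvPolynomial (Fin 3) ℂ)
    (h : ((L23 b).toLinearMap ^ 2) β = 0) :
    star ν b α β = α * β + (-(Complex.I * ν)) •
      ((L13 b) α * (L23 b) β) := by
  rw [star_eq_sum_range ν b α β 2]
  · simp [Finset.sum_range_succ]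
  · intro n hn
    rw [pow_eq_zero_of (L23 b).toLinearMap β 2 h hn, mul_zero]


end ParabolicCylinderStar

open ParabolicCylinderStar in
/-- Star products of coordinates for the twisted parabolic cylinders:
(i) `x¹⋆x² = x¹x² − iν·b²`; (ii) `x³⋆x² = x²x³ − iν·b·x¹`;
(iii) `x¹⋆x³ = x³⋆x¹ = x¹x³`; and (iv) each `f_c` is ⋆-central and undeformed. -/
theorem statement17 (ν b : ℝ) :
    (ParabolicCylinderStar.star ν b (X 0) (X 1)
        = X 0 * X 1 - C (Complex.I * ν * b ^ 2)) ∧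
    (ParabolicCylinderStar.star ν b (X 2) (X 1)
        = X 1 * X 2 - C (Complex.I * ν * b) * X 0) ∧
    (ParabolicCylinderStar.star ν b (X 0) (X 2) = X 0 * X 2 ∧
      ParabolicCylinderStar.star ν b (X 2) (X 0) = X 0 * X 2) ∧
    (∀ c : ℝ, ∀ α : MvPolynomial (Fin 3) ℂ,
      ParabolicCylinderStar.star ν b α (fc b c) = α * fc b c ∧
      ParabolicCylinderStar.star ν b (fc b c) α = fc b c * α) := by
  have h2 : ((L23 b).toLinearMap ^ 2) (X 1 : MvPolynomial (Fin 3) ℂ) = 0 := by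
    rw [pow_succ, Module.End.mul_apply]
    show (L23 b).toLinearMap ((L23 b) (X 1)) = 0
    rw [L23_X1]
    exact L23_C b _
  refine ⟨?_, ?_, ⟨?_, ?_⟩, ?_⟩
  · rw [star_eq_two ν b _ _ h2, L23_X1]
    have h13 : (L13 b) (X 0 : MvPolynomial (Fin 3) ℂ) = C (b:ℂ) := by
      simp [L13, pderiv_X]
    rw [h13, smul_eq_C_mul, ← C_mul]
    simp only [map_neg, map_mul, map_pow]
    ring
  · rw [star_eq_two ν b _ _ h2, L23_X1]
    have h13 : (L13 b) (X 2 : MvPolynomial (Fin 3) ℂ) = X 0 := by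
      simp [L13, pderiv_X]
    rw [h13, smul_eq_C_mul]
    simp only [map_neg, map_mul]
    ring
  · refine star_eq_right ν b _ _ ?_
    simp [L23, pderiv_X_of_ne (show (2:Fin 3) ≠ 1 by decide)]
  · refine (star_eq_right ν b _ _ ?_).trans (mul_comm _ _)
    simp [L23, pderiv_X_of_ne (show (0:Fin 3) ≠ 1 by decide)]
  · intro c α
    constructor
    · exact star_eq_right ν b _ _ (by simp [L23, fc, pderiv_X])
    · refine star_eq_left ν b _ _ ?_
      simp only [L13, fc, Derivation.add_apply, Derivation.smul_apply, map_sub, map_mul]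
      simp [pderiv_X]
      rw [show (2 : MvPolynomial (Fin 3) ℂ) = C 2 from (map_ofNat C 2).symm,
        show (C (2:ℂ)⁻¹ : MvPolynomial (Fin 3) ℂ) * (C 2 * X 0) = X 0 by
          rw [← mul_assoc, ← C_mul]; norm_num]
      ring
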